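/- arXiv:2502.01260 — 10 statements merged into one kernel-verified Lean document; each statement's English description precedes it below -/
import Mathlib

section
/- Let T be a tree and l : V(T) → ℝ≥0 a vertex labeling. Define d_l(u,v) = 0 if u = v and d_l(u,v) = max of l(w) over all vertices w on the unique path joining u and v otherwise. Then d_l is an ultrametric on V(T) if and only if max{l(u), l(v)} > 0 for every edge {u,v} of T. -/
/-- An ultrametric on `X`: symmetric, vanishing exactly on the diagonal,
and satisfying the strong triangle inequality. -/
def IsUltrametric {X : Type*} (d : X → X → NNReal) : Prop :=
  (∀ x y, d x y = d y x) ∧ (∀ x y, d x y = 0 ↔ x = y) ∧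
    ∀ x y z, d x y ≤ max (d x z) (d z y)

-- The distance associated to a vertex labeling of a tree: `0` on the diagonal,
-- and otherwise the maximum of the labels over the unique path joining the vertices.
open Classical in
noncomputable def treeDist {V : Type*} (T : SimpleGraph V) (hT : T.IsTree)
    (l : V → NNReal) (u v : V) : NNReal :=
  if u = v then 0
  else (((hT.existsUnique_path u v).choose).support.map l).foldr max 0

section Aux

lemma foldr_max_le {L : List NNReal} {c : NNReal} (h : ∀ a ∈ L, a ≤ c) :
    L.foldr max 0 ≤ c := by
  induction L with
  | nil => simp
  | cons a t ih =>
      simp only [List.foldr_cons, max_le_iff]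
      exact ⟨h a (by simp), ih fun b hb => h b (by simp [hb])⟩

lemma le_foldr_max {L : List NNReal} {a : NNReal} (h : a ∈ L) : a ≤ L.foldr max 0 := by
  induction L with
  | nil => simp at h
  | cons b t ih =>
      rcases List.mem_cons.1 h with h | h
      · simp [h]
      · exact le_trans (ih h) (le_max_right _ _)

lemma foldr_max_perm {L₁ L₂ : List NNReal} (h : L₁.Perm L₂) :
    L₁.foldr max 0 = L₂.foldr max 0 := by
  induction h with
  | nil => rfl
  | cons a _ ih => simp only [List.foldr_cons, ih]
  | swap a b l => simp only [List.foldr_cons]; rw [max_left_comm]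
  | trans _ _ ih1 ih2 => exact ih1.trans ih2

lemma treeDist_eq {V : Type*} (T : SimpleGraph V) (hT : T.IsTree) (l : V → NNReal) {u v : V}
    (hne : u ≠ v) (w : T.Walk u v) (hw : w.IsPath) :
    treeDist T hT l u v = (w.support.map l).foldr max 0 := by
  rw [treeDist, if_neg hne, ← (hT.existsUnique_path u v).choose_spec.2 w hw]

lemma le_treeDist {V : Type*} (T : SimpleGraph V) (hT : T.IsTree) (l : V → NNReal) {u v a : V}
    (hne : u ≠ v) (w : T.Walk u v) (hw : w.IsPath) (ha : a ∈ w.support) :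
    l a ≤ treeDist T hT l u v := by
  rw [treeDist_eq T hT l hne w hw]
  exact le_foldr_max (List.mem_map.2 ⟨a, ha, rfl⟩)

end Aux

theorem stmt0 {V : Type*} (T : SimpleGraph V) (hT : T.IsTree) (l : V → NNReal) :
    IsUltrametric (treeDist T hT l) ↔
      ∀ u v, T.Adj u v → 0 < max (l u) (l v) := by
  constructor
  · rintro ⟨_, hzero, _⟩ u v huv
    have hne : u ≠ v := huv.ne
    have hp : (SimpleGraph.Walk.cons huv SimpleGraph.Walk.nil).IsPath := by
      simp [SimpleGraph.Walk.isPath_def, hne]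
    have hd := treeDist_eq T hT l hne _ hp
    have hpos : treeDist T hT l u v ≠ 0 := fun h0 => hne ((hzero u v).1 h0)
    rw [hd] at hpos
    simp only [SimpleGraph.Walk.support_cons, SimpleGraph.Walk.support_nil,
      List.map_cons, List.map_nil, List.foldr_cons, List.foldr_nil] at hpos
    exact pos_iff_ne_zero.2 (by simpa using hpos)
  · intro hedge
    refine ⟨?_, ?_, ?_⟩
    · intro x y
      by_cases hxy : x = y
      · subst hxy; rfl
      · set p := (hT.existsUnique_path x y).choose with hp
        have hpP : p.IsPath := (hT.existsUnique_path x y).choose_spec.1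
        rw [treeDist_eq T hT l hxy p hpP,
            treeDist_eq T hT l (Ne.symm hxy) p.reverse hpP.reverse]
        refine foldr_max_perm ?_
        rw [SimpleGraph.Walk.support_reverse, List.map_reverse]
        exact (List.reverse_perm _).symm
    · intro x y
      constructor
      · intro h0
        by_contra hxy
        have hpP : (hT.existsUnique_path x y).choose.IsPath :=
          (hT.existsUnique_path x y).choose_spec.1
        obtain ⟨b, hadj, w, hw⟩ := SimpleGraph.Walk.not_nil_iff.1
          (SimpleGraph.Walk.not_nil_of_ne hxy (p := (hT.existsUnique_path x y).choose))
        have h1 : l x ≤ treeDist T hT l x y :=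
          le_treeDist T hT l hxy _ hpP (SimpleGraph.Walk.start_mem_support _)
        have h2 : l b ≤ treeDist T hT l x y := by
          refine le_treeDist T hT l hxy _ hpP ?_
          rw [hw, SimpleGraph.Walk.support_cons]
          exact List.mem_cons_of_mem _ (SimpleGraph.Walk.start_mem_support _)
        have := hedge x b hadj
        rw [h0] at h1 h2
        simp only [le_zero_iff] at h1 h2
        rw [h1, h2] at this
        simp at this
      · intro h; subst h; simp [treeDist]
    · intro x y z
      by_cases hxy : x = y
      · subst hxy; simp [treeDist]
      by_cases hxz : x = z
      · subst hxz; exact le_max_right _ _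
      by_cases hzy : z = y
      · subst hzy; exact le_max_left _ _
      haveI := Classical.decEq V
      set p := (hT.existsUnique_path x z).choose with hp
      have hpP : p.IsPath := (hT.existsUnique_path x z).choose_spec.1
      set q := (hT.existsUnique_path z y).choose with hq
      have hqP : q.IsPath := (hT.existsUnique_path z y).choose_spec.1
      have hb : (p.append q).bypass.IsPath := SimpleGraph.Walk.bypass_isPath _
      rw [treeDist_eq T hT l hxy _ hb]
      refine foldr_max_le ?_
      rintro a ha
      obtain ⟨w, hw, rfl⟩ := List.mem_map.1 ha
      have hw' : w ∈ (p.append q).support :=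
        SimpleGraph.Walk.support_bypass_subset _ hw
      rw [SimpleGraph.Walk.support_append] at hw'
      rcases List.mem_append.1 hw' with h | h
      · exact le_trans (le_treeDist T hT l hxz p hpP h) (le_max_left _ _)
      · exact le_trans (le_treeDist T hT l hzy q hqP (List.mem_of_mem_tail h))
          (le_max_right _ _)
end

section
/- Let (X,d) be an ultrametric space. Then (X,d) is generated by some labeled star graph (i.e., X = V(S) and d = d_l for a star graph S with non-degenerate labeling l) if and only if there exists a point x₀ ∈ X such that d(x₀, x) ≤ d(y, x) holds for all x, y ∈ X with x₀ ≠ x ≠ y. -/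
/-- `c` is the center of the star graph `S`: `c` is adjacent to every other
vertex and there are no edges between non-center vertices. -/
def IsStarCenter {V : Type*} (S : SimpleGraph V) (c : V) : Prop :=
  (∀ v, v ≠ c → S.Adj c v) ∧ ∀ u w, u ≠ c → w ≠ c → ¬S.Adj u w

/-- The ultrametric generated by a labeled star graph with center `c`. -/
def starDist {V : Type*} [DecidableEq V] (c : V) (l : V → NNReal) (u v : V) : NNReal :=
  if u = v then 0
  else if u = c then max (l c) (l v)
  else if v = c then max (l u) (l c)
  else max (l u) (max (l c) (l v))

open SimpleGraph

lemma isStarCenter_starGraph {V : Type*} (c : V) : IsStarCenter (starGraph c) c := by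
  refine ⟨fun v hv => starGraph_adj.2 ⟨hv.symm, .inl rfl⟩, ?_⟩
  rintro u w hu hw h
  rcases (starGraph_adj.1 h).2 with rfl | rfl <;> contradiction

lemma starDist_center_le {V : Type*} [DecidableEq V] (c : V) (l : V → NNReal) {x y : V}
    (hcx : c ≠ x) (hxy : x ≠ y) : starDist c l c x ≤ starDist c l y x := by
  by_cases hyc : y = c
  · rw [hyc]
  · simp only [starDist, if_neg hcx, if_neg hxy.symm, if_neg hyc, if_neg hcx.symm]
    exact le_max_right _ _

namespace IsUltrametric

variable {X : Type*} {d : X → X → NNReal}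

lemma pos_of_ne (hd : IsUltrametric d) {x y : X} (hxy : x ≠ y) : 0 < d x y :=
  pos_iff_ne_zero.2 fun h => hxy ((hd.2.1 x y).1 h)

lemma eq_max_of_nearest (hd : IsUltrametric d) {c : X}
    (hc : ∀ x y, c ≠ x → x ≠ y → d c x ≤ d y x) {u v : X}
    (huc : u ≠ c) (hvc : v ≠ c) (huv : u ≠ v) : d u v = max (d c u) (d c v) := by
  obtain ⟨hsymm, -, htri⟩ := hd
  refine le_antisymm ?_ (max_le ?_ ?_)
  · simpa only [hsymm u c] using htri u v c
  · simpa only [hsymm v u] using hc u v huc.symm huv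
  · exact hc v u hvc.symm huv.symm

lemma eq_starDist (hd : IsUltrametric d) [DecidableEq X] {c : X}
    (hc : ∀ x y, c ≠ x → x ≠ y → d c x ≤ d y x) (u v : X) : d u v = starDist c (d c) u v := by
  have hcc : d c c = 0 := (hd.2.1 c c).2 rfl
  unfold starDist
  split_ifs with huv huc hvc
  · exact (hd.2.1 u v).2 huv
  · simp [huc, hcc]
  · simp [hvc, hcc, hd.1 u c]
  · simp [hcc, hd.eq_max_of_nearest hc huc hvc huv]

lemma starGraph_adj_nondegenerate (hd : IsUltrametric d) (c : X) {u v : X}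
    (h : (starGraph c).Adj u v) : 0 < max (d c u) (d c v) := by
  obtain ⟨huv, rfl | rfl⟩ := starGraph_adj.1 h
  · exact lt_max_of_lt_right (hd.pos_of_ne huv)
  · exact lt_max_of_lt_left (hd.pos_of_ne huv.symm)

end IsUltrametric

theorem stmt1 {X : Type*} [DecidableEq X] (d : X → X → NNReal)
    (hd : IsUltrametric d) :
    (∃ (S : SimpleGraph X) (c : X) (l : X → NNReal),
        IsStarCenter S c ∧ (∀ u v, S.Adj u v → 0 < max (l u) (l v)) ∧
          ∀ u v, d u v = starDist c l u v) ↔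
      ∃ x₀ : X, ∀ x y : X, x₀ ≠ x → x ≠ y → d x₀ x ≤ d y x := by
  constructor
  · rintro ⟨-, c, l, -, -, hdl⟩
    exact ⟨c, fun x y hcx hxy => by simpa only [hdl] using starDist_center_le c l hcx hxy⟩
  · rintro ⟨c, hc⟩
    exact ⟨starGraph c, c, d c, isStarCenter_starGraph c,
      fun _ _ => hd.starGraph_adj_nondegenerate c, hd.eq_starDist hc⟩
end

section
/- Let (X,d) be a US-space with witness point x₀ (so d(x₀,x) ≤ d(y,x) whenever x₀ ≠ x ≠ y). Define l : X → ℝ≥0 by l(x₀) = 0 and l(x) = d(x₀,x) for x ≠ x₀. Then for all distinct x, y ∈ X, d(x,y) = max{l(x), l(y)} whenever x ≠ x₀ ≠ y, and d(x₀, y) = l(y) for all y. -/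
theorem stmt6 {X : Type*} (d : X → X → NNReal) (hd : IsUltrametric d)
    (x₀ : X) (hx₀ : ∀ x y : X, x₀ ≠ x → x ≠ y → d x₀ x ≤ d y x)
    (l : X → NNReal) (hl₀ : l x₀ = 0) (hl : ∀ x, x ≠ x₀ → l x = d x₀ x) :
    (∀ x y : X, x ≠ y → x ≠ x₀ → y ≠ x₀ → d x y = max (l x) (l y)) ∧
      ∀ y : X, d x₀ y = l y := by
  obtain ⟨hsymm, hzero, htri⟩ := hd
  constructor
  · intro x y hxy hx hy
    rw [hl x hx, hl y hy]
    apply le_antisymm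
    · calc d x y ≤ max (d x x₀) (d x₀ y) := htri x y x₀
        _ = max (d x₀ x) (d x₀ y) := by rw [hsymm x x₀]
    · apply max_le
      · calc d x₀ x ≤ d y x := hx₀ x y (Ne.symm hx) hxy
          _ = d x y := hsymm y x
      · exact hx₀ y x (Ne.symm hy) (Ne.symm hxy)
  · intro y
    by_cases h : y = x₀
    · rw [h, hl₀]; exact (hzero _ _).2 rfl
    · rw [hl y h]
end

section
/- Let (X,d) be a US-space with card(X) ≥ 2 and suppose inf D₀(X) = 0. If c₁ and c₂ are two points such that for each i ∈ {1,2}, d(cᵢ,x) ≤ d(y,x) whenever cᵢ ≠ x ≠ y, then c₁ = c₂; moreover any labeling l generating (X,d) via the star graph centered at c₁ satisfies l(c₁) = 0 and l(x) = d(x,c₁) for all x ≠ c₁. -/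
theorem stmt9 {X : Type*} [DecidableEq X] (d : X → X → NNReal)
    (hd : IsUltrametric d)
    (hcard : ∃ x y : X, x ≠ y)
    (hinf : ∀ ε : NNReal, 0 < ε → ∃ x y : X, x ≠ y ∧ d x y < ε)
    (c₁ c₂ : X)
    (h₁ : ∀ x y : X, c₁ ≠ x → x ≠ y → d c₁ x ≤ d y x)
    (h₂ : ∀ x y : X, c₂ ≠ x → x ≠ y → d c₂ x ≤ d y x)
    (l : X → NNReal) (hl : ∀ u v, d u v = starDist c₁ l u v) :
    c₁ = c₂ ∧ l c₁ = 0 ∧ ∀ x, x ≠ c₁ → l x = d x c₁ := by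
  obtain ⟨hsymm, hzero, htri⟩ := hd
  -- l c₁ = 0
  have hlc : l c₁ = 0 := by
    by_contra h
    have hpos : 0 < l c₁ := pos_iff_ne_zero.mpr h
    obtain ⟨x, y, hxy, hlt⟩ := hinf (l c₁) hpos
    have hge : l c₁ ≤ d x y := by
      rw [hl x y]
      unfold starDist
      rw [if_neg hxy]
      split_ifs with h1 h2
      · exact le_max_left _ _
      · exact le_max_right _ _
      · exact le_trans (le_max_left _ _) (le_max_right _ _)
    exact absurd hlt (not_lt.mpr hge)
  have hc12 : c₁ = c₂ := by
    by_contra hne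
    have hdpos : 0 < d c₁ c₂ := by
      rcases eq_or_ne (d c₁ c₂) 0 with h | h
      · exact absurd ((hzero _ _).mp h) hne
      · exact pos_iff_ne_zero.mpr h
    obtain ⟨x, y, hxy, hlt⟩ := hinf (d c₁ c₂) hdpos
    -- get z ≠ c₂ with d c₂ z < d c₁ c₂
    obtain ⟨z, hz, hdz⟩ : ∃ z, z ≠ c₂ ∧ d c₂ z < d c₁ c₂ := by
      by_cases hcx : c₂ = x
      · refine ⟨y, fun h => hxy (h.trans hcx).symm, ?_⟩
        have hcy : c₂ ≠ y := fun h => hxy (hcx.symm.trans h)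
        calc d c₂ y ≤ d x y := h₂ y x hcy (Ne.symm hxy)
          _ < d c₁ c₂ := hlt
      · refine ⟨x, fun h => hcx h.symm, ?_⟩
        have := h₂ x y hcx hxy
        calc d c₂ x ≤ d y x := this
          _ = d x y := hsymm _ _
          _ < d c₁ c₂ := hlt
    have h1z : d c₁ z < d c₁ c₂ := by
      rcases eq_or_ne c₁ z with h | h
      · rw [← h, (hzero c₁ c₁).mpr rfl]; exact hdpos
      · calc d c₁ z ≤ d c₂ z := h₁ z c₂ h hz
          _ < d c₁ c₂ := hdz
    have := htri c₁ c₂ z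
    have hzc : d z c₂ < d c₁ c₂ := by rw [hsymm]; exact hdz
    exact absurd this (not_le.mpr (max_lt h1z hzc))
  refine ⟨hc12, hlc, fun x hx => ?_⟩
  rw [hl x c₁]
  unfold starDist
  rw [if_neg hx, if_neg hx, if_pos rfl, hlc]
  simp
end

section
/- Let (X₁,d₁) and (X₂,d₂) be US-spaces generated by labeled star graphs S₁(l₁) and S₂(l₂) respectively. If (X₁,d₁) and (X₂,d₂) are isometric, then the underlying (unlabeled) star graphs S₁ and S₂ are isomorphic. -/
lemma star_adj_iff {V : Type*} {S : SimpleGraph V} {c : V} (h : IsStarCenter S c)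
    (u v : V) : S.Adj u v ↔ u ≠ v ∧ (u = c ∨ v = c) := by
  constructor
  · intro hadj
    refine ⟨hadj.ne, ?_⟩
    by_contra hc
    push_neg at hc
    exact h.2 u v hc.1 hc.2 hadj
  · rintro ⟨hne, hc | hc⟩
    · subst hc; exact h.1 v (fun hv => hne hv.symm)
    · subst hc; exact (h.1 u hne).symm

theorem stmt11 {X₁ X₂ : Type*} [DecidableEq X₁] [DecidableEq X₂]
    (d₁ : X₁ → X₁ → NNReal) (d₂ : X₂ → X₂ → NNReal)
    (hd₁ : IsUltrametric d₁) (hd₂ : IsUltrametric d₂)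
    (S₁ : SimpleGraph X₁) (c₁ : X₁) (l₁ : X₁ → NNReal)
    (hS₁ : IsStarCenter S₁ c₁) (hl₁ : ∀ u v, S₁.Adj u v → 0 < max (l₁ u) (l₁ v))
    (hgen₁ : ∀ u v, d₁ u v = starDist c₁ l₁ u v)
    (S₂ : SimpleGraph X₂) (c₂ : X₂) (l₂ : X₂ → NNReal)
    (hS₂ : IsStarCenter S₂ c₂) (hl₂ : ∀ u v, S₂.Adj u v → 0 < max (l₂ u) (l₂ v))
    (hgen₂ : ∀ u v, d₂ u v = starDist c₂ l₂ u v)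
    (F : X₁ ≃ X₂) (hF : ∀ x y : X₁, d₂ (F x) (F y) = d₁ x y) :
    ∃ g : X₁ ≃ X₂, ∀ u v : X₁, S₁.Adj u v ↔ S₂.Adj (g u) (g v) := by
  refine ⟨F.trans (Equiv.swap (F c₁) c₂), fun u v => ?_⟩
  set g := F.trans (Equiv.swap (F c₁) c₂) with hg
  have hgc : g c₁ = c₂ := by simp [hg]
  have hkey : ∀ x : X₁, g x = c₂ ↔ x = c₁ := by
    intro x
    constructor
    · intro h
      have := g.injective (h.trans hgc.symm)
      exact this
    · intro h; rw [h, hgc]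
  rw [star_adj_iff hS₁, star_adj_iff hS₂]
  constructor
  · rintro ⟨hne, hc⟩
    refine ⟨fun h => hne (g.injective h), ?_⟩
    rcases hc with h | h
    · left; exact (hkey u).2 h
    · right; exact (hkey v).2 h
  · rintro ⟨hne, hc⟩
    refine ⟨fun h => hne (by rw [h]), ?_⟩
    rcases hc with h | h
    · left; exact (hkey u).1 h
    · right; exact (hkey v).1 h
end

section
/- Let (X,d) be an ultrametric space generated by a labeled tree T₁(l₁) (so X = V(T₁), d = d_{l₁}) and let F : X → X be a bijection. Then F is a self-isometry of (X,d) if and only if there exists a labeled tree T₂(l₂) with V(T₂) = X, d = d_{l₂}, such that F is an isomorphism of labeled trees T₁(l₁) and T₂(l₂). -/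
/-! An isometry `F` of `d_{l₁}` is a labelled-tree isomorphism from `T₁(l₁)` onto the transported
tree `F(T₁)` labelled by `l₁ ∘ F⁻¹`, which generates the same metric. Conversely, a labelled-tree
isomorphism carries the unique path between two vertices onto the unique path between their
images, preserving the labels along it, so it preserves `d_l`. -/

namespace SimpleGraph

variable {V W : Type*}

theorem treeDist_eq_of_isPath {T : SimpleGraph V} (hT : T.IsTree) (l : V → NNReal) {u v : V}
    (huv : u ≠ v) {p : T.Walk u v} (hp : p.IsPath) :
    treeDist T hT l u v = (p.support.map l).foldr max 0 := by
  rw [treeDist, if_neg huv, (hT.existsUnique_path u v).unique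
    (hT.existsUnique_path u v).choose_spec.1 hp]

theorem Iso.treeDist_apply {T₁ : SimpleGraph V} {T₂ : SimpleGraph W} (e : T₁ ≃g T₂)
    (hT₁ : T₁.IsTree) (hT₂ : T₂.IsTree) {l₁ : V → NNReal} {l₂ : W → NNReal}
    (hl : ∀ v, l₂ (e v) = l₁ v) (u v : V) :
    treeDist T₂ hT₂ l₂ (e u) (e v) = treeDist T₁ hT₁ l₁ u v := by
  by_cases huv : u = v
  · simp [treeDist, huv]
  obtain ⟨p, hp, -⟩ := hT₁.existsUnique_path u v
  rw [treeDist_eq_of_isPath hT₁ l₁ huv hp,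
    treeDist_eq_of_isPath hT₂ l₂ (e.injective.ne huv) (p := p.map e.toHom) (hp.map e.injective),
    Walk.support_map, List.map_map]
  exact congrArg _ (List.map_congr_left fun a _ => hl a)

end SimpleGraph

open SimpleGraph in
theorem stmt13 {X : Type*} (d : X → X → NNReal)
    (T₁ : SimpleGraph X) (hT₁ : T₁.IsTree) (l₁ : X → NNReal)
    (hgen : ∀ u v, d u v = treeDist T₁ hT₁ l₁ u v)
    (F : X ≃ X) :
    (∀ x y : X, d (F x) (F y) = d x y) ↔
      ∃ (T₂ : SimpleGraph X) (hT₂ : T₂.IsTree) (l₂ : X → NNReal),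
        (∀ u v, d u v = treeDist T₂ hT₂ l₂ u v) ∧
          (∀ u v : X, T₁.Adj u v ↔ T₂.Adj (F u) (F v)) ∧
            ∀ v : X, l₂ (F v) = l₁ v := by
  constructor
  · intro hF
    let e := Iso.map F T₁
    have hT₂ := e.isTree_iff.mp hT₁
    refine ⟨_, hT₂, l₁ ∘ F.symm, fun u v => ?_, fun u v => e.map_adj_iff.symm, by simp⟩
    have h := e.treeDist_apply hT₁ hT₂ (l₁ := l₁) (l₂ := l₁ ∘ F.symm) (by simp [e])
      (F.symm u) (F.symm v)
    simp only [e, Iso.map_apply, Equiv.apply_symm_apply] at h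
    rw [h, ← hgen, ← hF (F.symm u), F.apply_symm_apply, F.apply_symm_apply]
  · rintro ⟨T₂, hT₂, l₂, hgen₂, hAdj, hl⟩ x y
    let e : T₁ ≃g T₂ := ⟨F, (hAdj _ _).symm⟩
    rw [hgen x y, hgen₂ (F x) (F y)]
    exact e.treeDist_apply hT₁ hT₂ hl x y
end

section
/- Let (X,d) be a US-space generated by a labeled star graph S(l) and suppose inf D₀(X) = 0, where D₀(X) is the set of nonzero distances. Then the group of self-isometries of (X,d) equals the group of self-isomorphisms of the labeled star graph S(l): a bijection F : X → X is a self-isometry of (X,d) if and only if F is a graph automorphism of S with l(F(v)) = l(v) for all v. -/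
theorem stmt14 {X : Type*} [DecidableEq X] (d : X → X → NNReal)
    (hd : IsUltrametric d)
    (S : SimpleGraph X) (c : X) (l : X → NNReal)
    (hS : IsStarCenter S c) (hl : ∀ u v, S.Adj u v → 0 < max (l u) (l v))
    (hgen : ∀ u v, d u v = starDist c l u v)
    (hinf : ∀ ε : NNReal, 0 < ε → ∃ x y : X, x ≠ y ∧ d x y < ε) :
    ∀ F : X ≃ X,
      (∀ x y : X, d (F x) (F y) = d x y) ↔
        ((∀ u v : X, S.Adj u v ↔ S.Adj (F u) (F v)) ∧ ∀ v : X, l (F v) = l v) := by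
  -- the center label is a lower bound of any nonzero distance
  have hlowc : ∀ x y : X, x ≠ y → l c ≤ d x y := by
    intro x y hxy
    rw [hgen]
    unfold starDist
    split_ifs with h1 h2 h3
    · exact absurd h1 hxy
    · exact le_max_left _ _
    · exact le_max_right _ _
    · exact le_max_of_le_right (le_max_left _ _)
  -- l c = 0
  have hlc : l c = 0 := by
    by_contra h
    obtain ⟨x, y, hxy, hlt⟩ := hinf (l c) (pos_iff_ne_zero.mpr h)
    exact absurd hlt (not_lt.mpr (hlowc x y hxy))
  -- non-center vertices have positive label
  have hlv : ∀ v : X, v ≠ c → 0 < l v := by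
    intro v hv
    have := hl c v (hS.1 v hv)
    simpa [hlc] using this
  -- lower bound: l u ≤ d u v for u ≠ v
  have hlow : ∀ u v : X, u ≠ v → l u ≤ d u v := by
    intro u v huv
    rw [hgen]
    unfold starDist
    split_ifs with h1 h2 h3
    · exact absurd h1 huv
    · subst h2; exact le_max_left _ _
    · exact le_max_left _ _
    · exact le_max_left _ _
  -- upper bound: there are points at distance arbitrarily close to l v
  have hup : ∀ (v : X) (ε : NNReal), 0 < ε → ∃ u : X, u ≠ v ∧ d v u < l v + ε := by
    intro v ε hε
    by_cases hv : v = c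
    · rw [hv]
      obtain ⟨x, y, hxy, hlt⟩ := hinf ε hε
      by_cases hx : x = c
      · have hy : y ≠ c := fun h => hxy (hx.trans h.symm)
        refine ⟨y, hy, ?_⟩
        have h1 : d c y = l y := by
          have hcy : c ≠ y := Ne.symm hy
          rw [hgen]; unfold starDist
          simp [hcy, hlc]
        have h2 : d x y = d c y := by rw [hx]
        calc d c y = d x y := h2.symm
          _ < ε := hlt
          _ ≤ l c + ε := le_add_self
      · refine ⟨x, hx, ?_⟩
        have h1 : d c x = l x := by
          have hcx : c ≠ x := Ne.symm hx
          rw [hgen]; unfold starDist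
          simp [hcx, hlc]
        calc d c x = l x := h1
          _ ≤ d x y := hlow x y hxy
          _ < ε := hlt
          _ ≤ l c + ε := le_add_self
    · refine ⟨c, fun h => hv h.symm, ?_⟩
      have : d v c = l v := by
        rw [hgen]
        unfold starDist
        simp [hv, hlc]
      rw [this]
      exact lt_add_of_pos_right _ hε
  -- key: any self-isometry does not increase labels
  have key : ∀ G : X ≃ X, (∀ x y : X, d (G x) (G y) = d x y) → ∀ v : X, l (G v) ≤ l v := by
    intro G hG v
    by_contra h
    have hlt : l v < l (G v) := not_le.mp h
    obtain ⟨u, hu, hdu⟩ := hup v (l (G v) - l v) (tsub_pos_of_lt hlt)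
    rw [add_tsub_cancel_of_le hlt.le] at hdu
    have h1 : l (G v) ≤ d (G v) (G u) := hlow _ _ (fun h => hu (G.injective h).symm)
    rw [hG] at h1
    exact absurd hdu (not_lt.mpr h1)
  -- adjacency characterization
  have hadjchar : ∀ u v : X, S.Adj u v ↔ (u ≠ v ∧ (u = c ∨ v = c)) := by
    intro u v
    constructor
    · intro h
      refine ⟨h.ne, ?_⟩
      by_contra hc
      push_neg at hc
      exact hS.2 u v hc.1 hc.2 h
    · rintro ⟨hne, (rfl | rfl)⟩
      · exact hS.1 v (Ne.symm hne)
      · exact (hS.1 u hne).symm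
  intro F
  constructor
  · -- isometry → graph automorphism preserving labels
    intro hiso
    have hL : ∀ v : X, l (F v) = l v := by
      intro v
      refine le_antisymm (key F hiso v) ?_
      have hinvs : ∀ x y : X, d (F.symm x) (F.symm y) = d x y := by
        intro x y
        conv_rhs => rw [← F.apply_symm_apply x, ← F.apply_symm_apply y]
        rw [hiso]
      have := key F.symm hinvs (F v)
      simpa using this
    have hFc : F c = c := by
      by_contra hFc
      have h0 : l (F c) = 0 := by rw [hL, hlc]
      exact absurd h0 (hlv (F c) hFc).ne'
    have hceq : ∀ x : X, F x = c ↔ x = c := fun x =>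
      ⟨fun h => F.injective (h.trans hFc.symm), fun h => by rw [h, hFc]⟩
    refine ⟨fun u v => ?_, hL⟩
    rw [hadjchar, hadjchar, hceq, hceq]
    simp [F.injective.ne_iff]
  · -- graph automorphism preserving labels → isometry
    rintro ⟨hA, hL⟩
    have hFc : F c = c := by
      by_contra hFc
      have h0 : l (F c) = 0 := by rw [hL, hlc]
      exact absurd h0 (hlv (F c) hFc).ne'
    have hceq : ∀ x : X, F x = c ↔ x = c := fun x =>
      ⟨fun h => F.injective (h.trans hFc.symm), fun h => by rw [h, hFc]⟩
    intro x y
    rw [hgen, hgen]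
    unfold starDist
    simp only [Equiv.apply_eq_iff_eq, hceq, hL]
end

section
/- Let (X,d) be a US-space. Then the set D₀(X) of nonzero distances has no least element if and only if for every labeled star graph S(l) generating (X,d), the self-isometry group of (X,d) coincides with the self-isomorphism group of S(l). -/
/-- The set of nonzero distances of `(X, d)`. -/
def D0 {X : Type*} (d : X → X → NNReal) : Set NNReal :=
  {r | ∃ x y : X, x ≠ y ∧ d x y = r}


/-!
For `u ≠ v` the star distance is `max (l c) (max (l u) (l v))`, so any bijection preserving labels
is an isometry, whatever it does to the edges. If no nonzero distance is least, then `l c < l v`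
for every leaf `v` (otherwise `l c` would be the least distance), and an isometry `F` with
`F c ≠ c` would make `l (F c)` the least distance; so isometries fix the center and preserve
labels.
Conversely, given a least distance, the transposition of `c` with a suitable leaf `w` is an
isometry that does not preserve labels: either `l w ≤ l c`, and relabelling `w` by `0` generates
the same metric, or all leaves have larger labels and `w` is a leaf of least label.
-/

open Function Equiv

theorem forall_exists_lt_iff_forall_not_isLeast {α : Type*} [LinearOrder α] {s : Set α} :
    (∀ r ∈ s, ∃ t ∈ s, t < r) ↔ ∀ a, ¬IsLeast s a := by
  refine ⟨fun h a ⟨ha, hlb⟩ => ?_, fun h r hr => ?_⟩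
  · obtain ⟨t, ht, hlt⟩ := h a ha
    exact (hlb ht).not_gt hlt
  · by_contra! hmin
    exact h r ⟨hr, hmin⟩

theorem IsStarCenter.adj_iff {V : Type*} {S : SimpleGraph V} {c : V} (hS : IsStarCenter S c)
    {u v : V} : S.Adj u v ↔ u ≠ v ∧ (u = c ∨ v = c) := by
  refine ⟨fun h => ⟨h.ne, ?_⟩, ?_⟩
  · by_contra! hne
    exact hS.2 u v hne.1 hne.2 h
  · rintro ⟨hne, rfl | rfl⟩
    · exact hS.1 v hne.symm
    · exact (hS.1 u hne).symm

theorem IsStarCenter.adj_apply_iff {V : Type*} {S : SimpleGraph V} {c : V} (hS : IsStarCenter S c)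
    {F : V ≃ V} (hF : F c = c) {u v : V} : S.Adj (F u) (F v) ↔ S.Adj u v := by
  simp only [hS.adj_iff, ne_eq, F.apply_eq_iff_eq, F.injective.eq_iff' hF]

section starDist

variable {X : Type*} [DecidableEq X] {c : X} {l : X → NNReal} {u v w : X}

theorem starDist_eq_ite (c : X) (l : X → NNReal) (u v : X) :
    starDist c l u v = if u = v then 0 else max (l c) (max (l u) (l v)) := by
  unfold starDist
  split_ifs <;> subst_vars <;> simp [max_left_comm]

theorem le_starDist_center (h : u ≠ v) : l c ≤ starDist c l u v := by
  simp [starDist_eq_ite, h]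

theorem le_starDist_left (h : u ≠ v) : l u ≤ starDist c l u v := by
  simp [starDist_eq_ite, h]

theorem starDist_center_left (hv : v ≠ c) : starDist c l c v = max (l c) (l v) := by
  simp [starDist_eq_ite, hv.symm]

theorem starDist_congr {l' : X → NNReal} (h : ∀ v, max (l' c) (l' v) = max (l c) (l v)) :
    starDist c l' = starDist c l := by
  have hmax (a b e : NNReal) : max a (max b e) = max (max a b) (max a e) :=
    sup_sup_distrib_left a b e
  ext u v
  simp only [starDist_eq_ite, hmax (l' c), hmax (l c), h]

theorem starDist_update_zero (hw : w ≠ c) (hle : l w ≤ l c) :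
    starDist c (update l w 0) = starDist c l :=
  starDist_congr fun v => by
    rcases eq_or_ne v w with rfl | hv
    · simp [hw.symm, hle]
    · simp [hv, hw.symm]

theorem starDist_apply_apply {F : X → X} (hF : Injective F) (hl : ∀ v, l (F v) = l v)
    (x y : X) :
    starDist c l (F x) (F y) = starDist c l x y := by
  simp [starDist_eq_ite, hF.eq_iff, hl]

theorem starDist_swap (h : ∀ z, z ≠ c → z ≠ w → l w ≤ max (l c) (l z)) (x y : X) :
    starDist c l (swap c w x) (swap c w y) = starDist c l x y := by
  simp only [starDist_eq_ite, (swap c w).injective.eq_iff]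
  split_ifs with hxy
  · rfl
  have hcw : ∀ a, a = c ∨ a = w → swap c w a = c ∨ swap c w a = w := by
    rintro a (rfl | rfl) <;> simp
  have hfix : ∀ a, ¬(a = c ∨ a = w) → swap c w a = a := fun a ha =>
    swap_apply_of_ne_of_ne (fun h => ha (.inl h)) (fun h => ha (.inr h))
  -- `l c` and `l w` are both absorbed by `max (l c) (l z)` for any other point `z`
  have hmax : ∀ a, a = c ∨ a = w → ∀ z, ¬(z = c ∨ z = w) →
      max (l c) (max (l a) (l z)) = max (l c) (l z) := by
    rintro a (rfl | rfl) z hz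
    · simp
    · obtain ⟨hzc, hzw⟩ := not_or.1 hz
      rw [max_left_comm, max_eq_right (h z hzc hzw)]
  by_cases hx : x = c ∨ x = w <;> by_cases hy : y = c ∨ y = w
  · rcases hx with rfl | rfl <;> rcases hy with rfl | rfl <;> simp [max_comm] at hxy ⊢
  · rw [hfix y hy, hmax _ (hcw x hx) y hy, hmax x hx y hy]
  · rw [hfix x hx, max_comm (l x), max_comm (l x), hmax _ (hcw y hy) x hx, hmax y hy x hx]
  · rw [hfix x hx, hfix y hy]

theorem starDist_of_center_le (h : ∀ v, v ≠ c → l c ≤ l v) (huv : u ≠ v) :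
    starDist c l u v = max (l u) (l v) := by
  rw [starDist_eq_ite, if_neg huv, max_eq_right]
  rcases eq_or_ne u c with rfl | hu
  · exact le_max_left _ _
  · exact (h u hu).trans (le_max_left _ _)

theorem D0_starDist_of_center_le (h : ∀ v, v ≠ c → l c ≤ l v) :
    D0 (starDist c l) = l '' {c}ᶜ := by
  ext r
  constructor
  · rintro ⟨x, y, hxy, rfl⟩
    rw [starDist_of_center_le h hxy]
    rcases eq_or_ne x c with rfl | hx
    · exact ⟨y, hxy.symm, (max_eq_right (h y hxy.symm)).symm⟩
    rcases eq_or_ne y c with rfl | hy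
    · exact ⟨x, hx, (max_eq_left (h x hx)).symm⟩
    rcases max_choice (l x) (l y) with he | he
    exacts [⟨x, hx, he.symm⟩, ⟨y, hy, he.symm⟩]
  · rintro ⟨v, hv, rfl⟩
    exact ⟨c, v, Ne.symm hv, by
      rw [starDist_of_center_le h (Ne.symm hv), max_eq_right (h v hv)]⟩

theorem isLeast_D0_of_le_center (hv : v ≠ c) (hle : l v ≤ l c) :
    IsLeast (D0 (starDist c l)) (l c) :=
  ⟨⟨c, v, hv.symm, by rw [starDist_center_left hv, max_eq_left hle]⟩,
    by rintro _ ⟨x, y, hxy, rfl⟩; exact le_starDist_center hxy⟩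

end starDist

section Isometry

variable {X : Type*} [DecidableEq X] {S : SimpleGraph X} {c : X} {l : X → NNReal}

theorem center_lt_of_forall_not_isLeast (hmin : ∀ r, ¬IsLeast (D0 (starDist c l)) r) {v : X}
    (hv : v ≠ c) : l c < l v :=
  not_le.1 fun hle => hmin _ (isLeast_D0_of_le_center hv hle)

theorem apply_center_of_isometry (hmin : ∀ r, ¬IsLeast (D0 (starDist c l)) r) {F : X ≃ X}
    (hF : ∀ x y, starDist c l (F x) (F y) = starDist c l x y) : F c = c := by
  have hc : ∀ v, v ≠ c → l c ≤ l v := fun _ hv =>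
    (center_lt_of_forall_not_isLeast hmin hv).le
  by_contra hw
  refine hmin (l (F c)) ⟨?_, ?_⟩
  · rw [D0_starDist_of_center_le hc]
    exact ⟨F c, hw, rfl⟩
  · rw [D0_starDist_of_center_le hc]
    rintro _ ⟨z, hz, rfl⟩
    calc l (F c) ≤ starDist c l (F c) (F z) := le_starDist_left (F.injective.ne (Ne.symm hz))
      _ = starDist c l c z := hF c z
      _ = l z := by rw [starDist_of_center_le hc (Ne.symm hz), max_eq_right (hc z hz)]

theorem label_apply_of_isometry (hmin : ∀ r, ¬IsLeast (D0 (starDist c l)) r) {F : X ≃ X}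
    (hF : ∀ x y, starDist c l (F x) (F y) = starDist c l x y) (v : X) : l (F v) = l v := by
  have hFc := apply_center_of_isometry hmin hF
  have hc : ∀ v, v ≠ c → starDist c l c v = l v := fun v hv => by
    rw [starDist_center_left hv, max_eq_right (center_lt_of_forall_not_isLeast hmin hv).le]
  rcases eq_or_ne v c with rfl | hv
  · rw [hFc]
  · have hFv : F v ≠ c := hFc ▸ F.injective.ne hv
    calc l (F v) = starDist c l (F c) (F v) := by rw [hFc, hc _ hFv]
      _ = l v := by rw [hF, hc _ hv]

theorem isometry_iff_of_forall_not_isLeast (hS : IsStarCenter S c)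
    (hmin : ∀ r, ¬IsLeast (D0 (starDist c l)) r) (F : X ≃ X) :
    (∀ x y, starDist c l (F x) (F y) = starDist c l x y) ↔
      (∀ u v, S.Adj u v ↔ S.Adj (F u) (F v)) ∧ ∀ v, l (F v) = l v :=
  ⟨fun hF => ⟨fun _ _ => (hS.adj_apply_iff (apply_center_of_isometry hmin hF)).symm,
      label_apply_of_isometry hmin hF⟩,
    fun h => starDist_apply_apply F.injective h.2⟩

theorem exists_swap_isometry_not_label_preserving (hS : IsStarCenter S c)
    (hnd : ∀ u v, S.Adj u v → 0 < max (l u) (l v)) {r : NNReal}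
    (hr : IsLeast (D0 (starDist c l)) r) :
    ∃ (l' : X → NNReal) (w : X), (∀ u v, S.Adj u v → 0 < max (l' u) (l' v)) ∧
      starDist c l' = starDist c l ∧
      (∀ x y, starDist c l (swap c w x) (swap c w y) = starDist c l x y) ∧ l' w ≠ l' c := by
  by_cases hsmall : ∃ w, w ≠ c ∧ l w ≤ l c
  · obtain ⟨w, hw, hle⟩ := hsmall
    have hpos : 0 < l c := by simpa [max_eq_left hle] using hnd c w (hS.1 w hw)
    have hc : update l w 0 c = l c := update_of_ne hw.symm _ _
    refine ⟨update l w 0, w, fun u v huv => ?_, starDist_update_zero hw hle,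
      starDist_swap fun z _ _ => hle.trans (le_max_left _ _), by simpa [hc] using hpos.ne⟩
    rcases (hS.adj_iff.1 huv).2 with rfl | rfl
    · exact lt_max_of_lt_left (hc ▸ hpos)
    · exact lt_max_of_lt_right (hc ▸ hpos)
  · push Not at hsmall
    rw [D0_starDist_of_center_le fun v hv => (hsmall v hv).le] at hr
    obtain ⟨⟨a, ha, rfl⟩, hlb⟩ := hr
    have hswap := starDist_swap (c := c) (l := l) fun z hz _ =>
      (hlb ⟨z, hz, rfl⟩).trans (le_max_right _ _)
    exact ⟨l, a, hnd, rfl, hswap, (hsmall a ha).ne'⟩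

end Isometry

theorem stmt15_general {X : Type*} [DecidableEq X] (d : X → X → NNReal)
    (hUS : ∃ (S : SimpleGraph X) (c : X) (l : X → NNReal),
      IsStarCenter S c ∧ (∀ u v, S.Adj u v → 0 < max (l u) (l v)) ∧
        ∀ u v, d u v = starDist c l u v) :
    (∀ r ∈ D0 d, ∃ s ∈ D0 d, s < r) ↔
      ∀ (S : SimpleGraph X) (c : X) (l : X → NNReal),
        IsStarCenter S c → (∀ u v, S.Adj u v → 0 < max (l u) (l v)) →
          (∀ u v, d u v = starDist c l u v) →
            ∀ F : X ≃ X,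
              (∀ x y : X, d (F x) (F y) = d x y) ↔
                ((∀ u v : X, S.Adj u v ↔ S.Adj (F u) (F v)) ∧
                  ∀ v : X, l (F v) = l v) := by
  rw [forall_exists_lt_iff_forall_not_isLeast]
  constructor
  · intro hmin S c l hS _ hd
    obtain rfl : d = starDist c l := funext₂ hd
    exact isometry_iff_of_forall_not_isLeast hS hmin
  · obtain ⟨S, c, l, hS, hnd, hd⟩ := hUS
    obtain rfl : d = starDist c l := funext₂ hd
    intro h r hr
    obtain ⟨l', w, hnd', hl', hswap, hne⟩ := exists_swap_isometry_not_label_preserving hS hnd hr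
    have hlabel := ((h S c l' hS hnd' (by simp [hl']) (swap c w)).1 hswap).2 c
    exact hne (by simpa using hlabel)

theorem stmt15 {X : Type*} [DecidableEq X] (d : X → X → NNReal)
    (hd : IsUltrametric d)
    (hUS : ∃ (S : SimpleGraph X) (c : X) (l : X → NNReal),
      IsStarCenter S c ∧ (∀ u v, S.Adj u v → 0 < max (l u) (l v)) ∧
        ∀ u v, d u v = starDist c l u v) :
    (∀ r ∈ D0 d, ∃ s ∈ D0 d, s < r) ↔
      ∀ (S : SimpleGraph X) (c : X) (l : X → NNReal),
        IsStarCenter S c → (∀ u v, S.Adj u v → 0 < max (l u) (l v)) →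
          (∀ u v, d u v = starDist c l u v) →
            ∀ F : X ≃ X,
              (∀ x y : X, d (F x) (F y) = d x y) ↔
                ((∀ u v : X, S.Adj u v ↔ S.Adj (F u) (F v)) ∧
                  ∀ v : X, l (F v) = l v) :=
  stmt15_general d hUS
end

section
/- Let (X,d) be an ultrametric space such that every nonzero distance is strictly greater than m := inf D₀(X), where D₀(X) is the set of nonzero distances (i.e., D₀(X) has no least element or is empty, with m ≥ 0). Define d*(x,y) = d(x,y) − m for x ≠ y and d*(x,x) = 0. Then d* is an ultrametric on X, and the self-isometry group of (X,d*) equals the self-isometry group of (X,d). -/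
/-- `d*` obtained by subtracting `m = inf D₀(X)` from every nonzero distance. -/
noncomputable def dStar {X : Type*} [DecidableEq X] (d : X → X → NNReal)
    (x y : X) : NNReal :=
  if x = y then 0 else d x y - sInf (D0 d)

theorem stmt16 {X : Type*} [DecidableEq X] (d : X → X → NNReal)
    (hd : IsUltrametric d)
    (hm : ∀ x y : X, x ≠ y → sInf (D0 d) < d x y) :
    IsUltrametric (dStar d) ∧
      ∀ F : X ≃ X,
        (∀ x y : X, dStar d (F x) (F y) = dStar d x y) ↔
          (∀ x y : X, d (F x) (F y) = d x y) := by
  obtain ⟨hsymm, hzero, hult⟩ := hd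
  set m := sInf (D0 d) with hmdef
  have hsub : ∀ {a b : NNReal}, m < a → m < b → a - m = b - m → a = b := by
    intro a b ha hb h
    have := congrArg (· + m) h
    simpa [tsub_add_cancel_of_le ha.le, tsub_add_cancel_of_le hb.le] using this
  constructor
  · refine ⟨?_, ?_, ?_⟩
    · intro x y
      by_cases h : x = y
      · simp [dStar, h]
      · simp [dStar, h, Ne.symm h, hsymm x y]
    · intro x y
      by_cases h : x = y
      · simp [dStar, h]
      · simp only [dStar, if_neg h]
        constructor
        · intro hc
          exact absurd (tsub_eq_zero_iff_le.mp hc) (not_le.mpr (hm x y h))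
        · intro hc; exact absurd hc h
    · intro x y z
      by_cases hxy : x = y
      · simp [dStar, hxy]
      by_cases hxz : x = z
      · subst hxz; simp [dStar, hxy]
      by_cases hzy : z = y
      · subst hzy; simp [dStar, hxy]
      · simp only [dStar, if_neg hxy, if_neg hxz, if_neg hzy]
        calc d x y - m ≤ max (d x z) (d z y) - m := tsub_le_tsub_right (hult x y z) m
          _ = max (d x z - m) (d z y - m) := by
              rcases max_cases (d x z) (d z y) with ⟨he, hle⟩ | ⟨he, hlt⟩
              · rw [he, max_eq_left (tsub_le_tsub_right hle m)]
              · rw [he, max_eq_right (tsub_le_tsub_right hlt.le m)]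
  · intro F
    constructor
    · intro h x y
      by_cases hxy : x = y
      · subst hxy; rw [(hzero _ _).mpr rfl, (hzero _ _).mpr rfl]
      · have hF : F x ≠ F y := fun hc => hxy (F.injective hc)
        have hh := h x y
        simp only [dStar, if_neg hxy, if_neg hF] at hh
        exact hsub (hm _ _ hF) (hm _ _ hxy) hh
    · intro h x y
      by_cases hxy : x = y
      · subst hxy; simp [dStar]
      · have hF : F x ≠ F y := fun hc => hxy (F.injective hc)
        simp [dStar, hxy, hF, h x y]
end

section
/- Let X be a set with card(X) ≥ 2 and let d be an ultrametric on X with a point c satisfying d(c,x) ≤ d(y,x) whenever c ≠ x ≠ y. Suppose D₀(X) has a least element, attained as d(c, v*) for some v* ≠ c with d(c,v*) ≤ d(c,u) for all u ≠ c. Then the map F swapping c and v* and fixing all other points is a self-isometry of (X,d). -/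
theorem stmt18 {X : Type*} [DecidableEq X] (d : X → X → NNReal)
    (hd : IsUltrametric d)
    (hcard : ∃ a b : X, a ≠ b)
    (c : X) (hc : ∀ x y : X, c ≠ x → x ≠ y → d c x ≤ d y x)
    (v : X) (hv : v ≠ c)
    (hmin : ∀ u : X, u ≠ c → d c v ≤ d c u)
    (hleast : ∀ x y : X, x ≠ y → d c v ≤ d x y) :
    ∀ x y : X, d (Equiv.swap c v x) (Equiv.swap c v y) = d x y := by
  obtain ⟨hsymm, hzero, hult⟩ := hd
  have key : ∀ x : X, x ≠ c → x ≠ v → d c x = d v x := by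
    intro x hxc hxv
    apply le_antisymm
    · have h1 := hult c x v
      have h2 : d c v ≤ d v x := by
        rw [hsymm v x]; exact hleast x v (fun h => hxv h)
      calc d c x ≤ max (d c v) (d v x) := h1
        _ = d v x := max_eq_right h2
    · have h1 := hult v x c
      have h2 : d v c ≤ d c x := by
        rw [hsymm v c]; exact hmin x (fun h => hxc h)
      calc d v x ≤ max (d v c) (d c x) := h1
        _ = d c x := max_eq_right h2
  intro x y
  rcases eq_or_ne x c with hx | hxc
  · rcases eq_or_ne y c with hy | hyc
    · rw [hx, hy, Equiv.swap_apply_left, (hzero v v).mpr rfl, (hzero c c).mpr rfl]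
    rcases eq_or_ne y v with hy | hyv
    · rw [hx, hy, Equiv.swap_apply_left, Equiv.swap_apply_right, hsymm]
    · rw [hx, Equiv.swap_apply_left, Equiv.swap_apply_of_ne_of_ne hyc hyv,
        key y hyc hyv]
  rcases eq_or_ne x v with hx | hxv
  · rcases eq_or_ne y c with hy | hyc
    · rw [hx, hy, Equiv.swap_apply_left, Equiv.swap_apply_right, hsymm]
    rcases eq_or_ne y v with hy | hyv
    · rw [hx, hy, Equiv.swap_apply_right, (hzero c c).mpr rfl, (hzero v v).mpr rfl]
    · rw [hx, Equiv.swap_apply_right, Equiv.swap_apply_of_ne_of_ne hyc hyv,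
        key y hyc hyv]
  rw [Equiv.swap_apply_of_ne_of_ne hxc hxv]
  rcases eq_or_ne y c with hy | hyc
  · rw [hy, Equiv.swap_apply_left, hsymm x v, hsymm x c, key x hxc hxv]
  rcases eq_or_ne y v with hy | hyv
  · rw [hy, Equiv.swap_apply_right, hsymm x c, hsymm x v, key x hxc hxv]
  · rw [Equiv.swap_apply_of_ne_of_ne hyc hyv]
end
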